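/- arXiv:2102.05940 — 4 statements merged into one kernel-verified Lean document; each statement's English description precedes it below -/
import Mathlib

section
/- Let (X,d,μ) be a geodesic metric measure space that is κ-doubling at scale R, for some κ ≥ 1 and R ∈ (0,∞]. Then there exist constants λ > 0 and δ > 0 depending only on κ such that μ(B_s(x))·e^{−λ}·(r/s)^δ ≤ μ(B_r(x)) for every x ∈ X and all radii 0 < s < r < min{R, D/2}, where D = diam(X,d) = sup{d(x,y) : x,y ∈ X}. -/
open MeasureTheory Metric Filter Set
open scoped ENNReal

/-- `(X,d,μ)` is `κ`-doubling at scale `R ∈ (0,∞]`. -/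
def DoublingAtScale {X : Type*} [MetricSpace X] [MeasurableSpace X] (μ : Measure X)
    (κ : ℝ) (R : ℝ≥0∞) : Prop :=
  ∀ (x : X) (r : ℝ), 0 < r → ENNReal.ofReal r ≤ R →
    μ (ball x (2 * r)) ≤ ENNReal.ofReal κ * μ (ball x r)

/-- The measure is finite and nonzero on every ball of positive radius. -/
def BallMeasureNontrivial {X : Type*} [MetricSpace X] [MeasurableSpace X]
    (μ : Measure X) : Prop :=
  ∀ (x : X) (r : ℝ), 0 < r → 0 < μ (ball x r) ∧ μ (ball x r) < ⊤

/-- A metric space is geodesic: any two points are joined by a curve, parametrized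
by arclength, whose length equals the distance between them. -/
def IsGeodesicSpace (X : Type*) [MetricSpace X] : Prop :=
  ∀ x y : X, ∃ γ : ℝ → X, γ 0 = x ∧ γ (dist x y) = y ∧
    ∀ s ∈ Set.Icc (0 : ℝ) (dist x y), ∀ t ∈ Set.Icc (0 : ℝ) (dist x y),
      dist (γ s) (γ t) = |s - t|

/-!
Fix `t` below the scale `R` with `2t < diam X`. Some point lies farther than `t` from `x`, so
a geodesic towards it passes through a point `z` with `d(x,z) = 3t/4`. The ball `B(z,t/4)`
lies in `B(x,t)` and misses `B(x,t/2)`, while three doublings from `B(z,t/4)` cover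
`B(z,2t) ⊇ B(x,t/2)`. Hence `μ(B(x,t)) ≥ (1 + κ⁻³) μ(B(x,t/2))`, and iterating over dyadic
scales gives the power law with `δ = log(1 + κ⁻³) / log 2`.
-/

lemma exists_lt_dist_of_ofReal_lt_ediam_div_two {X : Type*} [MetricSpace X] (x : X) {t : ℝ}
    (ht : ENNReal.ofReal t < ediam (univ : Set X) / 2) : ∃ w, t < dist x w := by
  by_contra! hfar
  have hcover : (univ : Set X) ⊆ closedEBall x (ENNReal.ofReal t) := fun w _ => by
    rw [mem_closedEBall, edist_dist, dist_comm]
    exact ENNReal.ofReal_le_ofReal (hfar w)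
  have hdiam : ediam (univ : Set X) ≤ 2 * ENNReal.ofReal t :=
    (ediam_mono hcover).trans ediam_closedEBall_le
  exact ht.not_ge (ENNReal.div_le_of_le_mul' hdiam)

lemma IsGeodesicSpace.exists_dist_eq {X : Type*} [MetricSpace X] (hgeo : IsGeodesicSpace X)
    {x w : X} {ρ : ℝ} (hρ : 0 ≤ ρ) (hρw : ρ ≤ dist x w) : ∃ z, dist x z = ρ := by
  obtain ⟨γ, hγx, -, hγ⟩ := hgeo x w
  refine ⟨γ ρ, ?_⟩
  rw [← hγx, hγ 0 ⟨le_rfl, dist_nonneg⟩ ρ ⟨hρ, hρw⟩, zero_sub, abs_neg,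
    abs_of_nonneg hρ]

lemma DoublingAtScale.measure_ball_two_pow_mul_le {X : Type*} [MetricSpace X]
    [MeasurableSpace X] {μ : Measure X} {κ : ℝ} {R : ℝ≥0∞} (hdb : DoublingAtScale μ κ R)
    (x : X) {r : ℝ} (hr : 0 < r) (n : ℕ) (hR : ENNReal.ofReal (2 ^ n * r) ≤ R) :
    μ (ball x (2 ^ (n + 1) * r)) ≤ ENNReal.ofReal κ ^ (n + 1) * μ (ball x r) := by
  induction n with
  | zero => simpa using hdb x r hr (by simpa using hR)
  | succ n ih =>
    have hRn : ENNReal.ofReal (2 ^ n * r) ≤ R :=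
      (ENNReal.ofReal_le_ofReal (by gcongr <;> norm_num)).trans hR
    calc μ (ball x (2 ^ (n + 2) * r)) = μ (ball x (2 * (2 ^ (n + 1) * r))) := by ring_nf
      _ ≤ ENNReal.ofReal κ * μ (ball x (2 ^ (n + 1) * r)) := hdb x _ (by positivity) hR
      _ ≤ ENNReal.ofReal κ * (ENNReal.ofReal κ ^ (n + 1) * μ (ball x r)) := by
          gcongr; exact ih hRn
      _ = ENNReal.ofReal κ ^ (n + 2) * μ (ball x r) := by ring

section ReverseDoubling

variable {X : Type*} [MetricSpace X] [MeasurableSpace X] [OpensMeasurableSpace X]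
  {μ : Measure X} {κ : ℝ} {R : ℝ≥0∞}

lemma ofReal_mul_measure_ball_half_le (hκ : 0 < κ) (hgeo : IsGeodesicSpace X)
    (hdb : DoublingAtScale μ κ R) (x : X) {t : ℝ} (ht : 0 < t) (htR : ENNReal.ofReal t ≤ R)
    (htd : ENNReal.ofReal t < ediam (univ : Set X) / 2) :
    ENNReal.ofReal (1 + κ⁻¹ ^ 3) * μ (ball x (t / 2)) ≤ μ (ball x t) := by
  obtain ⟨w, hw⟩ := exists_lt_dist_of_ofReal_lt_ediam_div_two x htd
  obtain ⟨z, hxz⟩ : ∃ z, dist x z = 3 * t / 4 :=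
    hgeo.exists_dist_eq (by positivity) (by linarith : 3 * t / 4 ≤ dist x w)
  have hinner : ball z (t / 4) ⊆ ball x t := ball_subset_ball' (by rw [dist_comm]; linarith)
  have hdisj : Disjoint (ball x (t / 2)) (ball z (t / 4)) := ball_disjoint_ball (by linarith)
  have hcover : ball x (t / 2) ⊆ ball z (2 ^ 3 * (t / 4)) := ball_subset_ball' (by linarith)
  have hz : μ (ball x (t / 2)) ≤ ENNReal.ofReal (κ ^ 3) * μ (ball z (t / 4)) := by
    rw [ENNReal.ofReal_pow hκ.le]
    exact (measure_mono hcover).trans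
      (hdb.measure_ball_two_pow_mul_le z (by positivity) 2 (by convert htR using 2; ring))
  have hz' : ENNReal.ofReal (κ⁻¹ ^ 3) * μ (ball x (t / 2)) ≤ μ (ball z (t / 4)) :=
    calc ENNReal.ofReal (κ⁻¹ ^ 3) * μ (ball x (t / 2))
        ≤ ENNReal.ofReal (κ⁻¹ ^ 3) * (ENNReal.ofReal (κ ^ 3) * μ (ball z (t / 4))) := by
          gcongr
      _ = μ (ball z (t / 4)) := by
          rw [← mul_assoc, ← ENNReal.ofReal_mul (by positivity), ← mul_pow,
            inv_mul_cancel₀ hκ.ne', one_pow, ENNReal.ofReal_one, one_mul]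
  calc ENNReal.ofReal (1 + κ⁻¹ ^ 3) * μ (ball x (t / 2))
      = μ (ball x (t / 2)) + ENNReal.ofReal (κ⁻¹ ^ 3) * μ (ball x (t / 2)) := by
        rw [ENNReal.ofReal_add zero_le_one (by positivity), ENNReal.ofReal_one, add_mul, one_mul]
    _ ≤ μ (ball x (t / 2)) + μ (ball z (t / 4)) := by gcongr
    _ = μ (ball x (t / 2) ∪ ball z (t / 4)) := (measure_union hdisj measurableSet_ball).symm
    _ ≤ μ (ball x t) := measure_mono (union_subset (ball_subset_ball (by linarith)) hinner)

lemma ofReal_pow_mul_measure_ball_div_two_pow_le (hκ : 0 < κ) (hgeo : IsGeodesicSpace X)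
    (hdb : DoublingAtScale μ κ R) (x : X) (n : ℕ) {t : ℝ} (ht : 0 < t)
    (htR : ENNReal.ofReal t ≤ R) (htd : ENNReal.ofReal t < ediam (univ : Set X) / 2) :
    ENNReal.ofReal ((1 + κ⁻¹ ^ 3) ^ n) * μ (ball x (t / 2 ^ n)) ≤ μ (ball x t) := by
  induction n generalizing t with
  | zero => simp
  | succ n ih =>
    have hhalf : ENNReal.ofReal (t / 2) ≤ ENNReal.ofReal t :=
      ENNReal.ofReal_le_ofReal (by linarith)
    calc ENNReal.ofReal ((1 + κ⁻¹ ^ 3) ^ (n + 1)) * μ (ball x (t / 2 ^ (n + 1)))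
        = ENNReal.ofReal (1 + κ⁻¹ ^ 3) *
            (ENNReal.ofReal ((1 + κ⁻¹ ^ 3) ^ n) * μ (ball x (t / 2 / 2 ^ n))) := by
          rw [pow_succ, ENNReal.ofReal_mul (by positivity), div_div, ← pow_succ']
          ring
      _ ≤ ENNReal.ofReal (1 + κ⁻¹ ^ 3) * μ (ball x (t / 2)) := by
          gcongr
          exact ih (by positivity) (hhalf.trans htR) (hhalf.trans_lt htd)
      _ ≤ μ (ball x t) := ofReal_mul_measure_ball_half_le hκ hgeo hdb x ht htR htd

end ReverseDoubling

lemma two_pow_rpow_log_div_log_two {c : ℝ} (hc : 0 < c) (n : ℕ) :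
    ((2 : ℝ) ^ n) ^ (Real.log c / Real.log 2) = c ^ n := by
  have hlog2 : Real.log 2 ≠ 0 := (Real.log_pos one_lt_two).ne'
  rw [Real.rpow_def_of_pos (by positivity), Real.log_pow, ← Real.exp_log (pow_pos hc n),
    Real.log_pow]
  field_simp

lemma inv_mul_rpow_log_div_log_two_le {c q : ℝ} (hc : 1 ≤ c) (hq : 0 < q) {n : ℕ}
    (hqn : q < 2 ^ (n + 1)) : c⁻¹ * q ^ (Real.log c / Real.log 2) ≤ c ^ n := by
  have hc0 : 0 < c := zero_lt_one.trans_le hc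
  have hexp : 0 ≤ Real.log c / Real.log 2 :=
    div_nonneg (Real.log_nonneg hc) (Real.log_pos one_lt_two).le
  calc c⁻¹ * q ^ (Real.log c / Real.log 2)
      ≤ c⁻¹ * ((2 : ℝ) ^ (n + 1)) ^ (Real.log c / Real.log 2) := by
        gcongr
    _ = c ^ n := by
        rw [two_pow_rpow_log_div_log_two hc0, pow_succ]
        field_simp

/-- Reverse doubling:  `μ(B_s(x))·e^{−λ}·(r/s)^δ ≤ μ(B_r(x))` for
`0 < s < r < min{R, diam(X)/2}`, with `λ, δ` depending only on `κ`. -/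
theorem reverse_doubling (κ : ℝ) (hκ : 1 ≤ κ) :
    ∃ lam δ : ℝ, 0 < lam ∧ 0 < δ ∧
      ∀ (X : Type) [MetricSpace X] [MeasurableSpace X] [BorelSpace X]
        (μ : Measure X) (R : ℝ≥0∞),
        0 < R → BallMeasureNontrivial μ → IsGeodesicSpace X → DoublingAtScale μ κ R →
        ∀ (x : X) (s r : ℝ), 0 < s → s < r →
          ENNReal.ofReal r < min R (EMetric.diam (Set.univ : Set X) / 2) →
          ENNReal.ofReal (Real.exp (-lam) * (r / s) ^ δ) * μ (ball x s) ≤ μ (ball x r) := by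
  set c : ℝ := 1 + κ⁻¹ ^ 3
  have hc : 1 < c := lt_add_of_pos_right 1 (by positivity)
  have hlam : 0 < Real.log c := Real.log_pos hc
  refine ⟨Real.log c, Real.log c / Real.log 2, hlam,
    div_pos hlam (Real.log_pos one_lt_two), ?_⟩
  intro X _ _ _ μ R _ _ hgeo hdb x s r hs hsr hr
  obtain ⟨n, hn, hn'⟩ := exists_nat_pow_near ((one_le_div₀ hs).mpr hsr.le) one_lt_two
  have hsn : s ≤ r / 2 ^ n := by
    rwa [le_div_iff₀ (by positivity), mul_comm, ← le_div_iff₀ hs]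
  have hconst : Real.exp (-Real.log c) * (r / s) ^ (Real.log c / Real.log 2) ≤ c ^ n := by
    rw [Real.exp_neg, Real.exp_log (by linarith)]
    exact inv_mul_rpow_log_div_log_two_le hc.le (div_pos (hs.trans hsr) hs) hn'
  calc ENNReal.ofReal (Real.exp (-Real.log c) * (r / s) ^ (Real.log c / Real.log 2)) * μ (ball x s)
      ≤ ENNReal.ofReal (c ^ n) * μ (ball x (r / 2 ^ n)) := by
        gcongr
    _ ≤ μ (ball x r) :=
        ofReal_pow_mul_measure_ball_div_two_pow_le (by positivity) hgeo hdb x n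
          (hs.trans hsr) (le_min_iff.mp hr.le).1 (lt_min_iff.mp hr).2
end

section
/- Let (X,d,μ) be a geodesic metric measure space that is κ-doubling at scale R, for some κ ≥ 1 and R ∈ (0,∞). Then every metric sphere is μ-null: for every x ∈ X and every r > 0, μ({y ∈ X : d(x,y) = r}) = 0; in particular the topological boundary of every open ball has μ-measure zero. -/
/-!
Cover the sphere `S(x, r)` by a maximal `4ε`-separated net. Moving each net point a distance `ε`
towards `x` along a geodesic produces centres of pairwise disjoint `ε`-balls inside the annulus
`B(x, r) \ B̄(x, r - 2ε)`, and each `4ε`-ball of the cover lies in the `8ε`-ball about the moved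
point, which three doublings compare with its `ε`-ball. Hence `μ S ≤ κ³ μ (annulus)`; as `ε → 0`
the annuli decrease to the empty set inside the finite-measure ball `B(x, r)`, so `μ S = 0`.
-/

open MeasureTheory Metric Filter Set
open scoped ENNReal

open scoped NNReal Topology

lemma IsGeodesicSpace.exists_dist_eq_s3 {X : Type*} [MetricSpace X] (h : IsGeodesicSpace X)
    (x y : X) {s : ℝ} (hs₀ : 0 ≤ s) (hs : s ≤ dist x y) :
    ∃ z, dist x z = s ∧ dist z y = dist x y - s := by
  obtain ⟨γ, hγ₀, hγ₁, hγ⟩ := h x y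
  have h₀ : (0 : ℝ) ∈ Icc 0 (dist x y) := ⟨le_rfl, dist_nonneg⟩
  have h₁ : dist x y ∈ Icc 0 (dist x y) := ⟨dist_nonneg, le_rfl⟩
  refine ⟨γ s, ?_, ?_⟩
  · rw [← hγ₀, hγ 0 h₀ s ⟨hs₀, hs⟩, zero_sub, abs_neg, abs_of_nonneg hs₀]
  · rw [← hγ₁, hγ s ⟨hs₀, hs⟩ _ h₁, hγ₁, abs_of_nonpos (by linarith), neg_sub]

lemma Metric.exists_maximal_isSeparated {X : Type*} [PseudoEMetricSpace X] (ε : ℝ≥0∞)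
    (s : Set X) : ∃ N, Maximal (fun N ↦ N ⊆ s ∧ IsSeparated ε N) N :=
  zorn_subset _ fun c hc hchain ↦
    ⟨⋃₀ c, ⟨sUnion_subset fun _ ht ↦ (hc ht).1,
      (pairwise_sUnion hchain.directedOn).2 fun _ ht ↦ (hc ht).2⟩,
      fun _ ↦ subset_sUnion_of_mem⟩

lemma Set.PairwiseDisjoint.countable_of_measure_pos {α ι : Type*} [MeasurableSpace α]
    {μ : Measure α} {T : Set ι} {f : ι → Set α} (hd : T.PairwiseDisjoint f)
    (hf : ∀ i ∈ T, MeasurableSet (f i)) (hpos : ∀ i ∈ T, 0 < μ (f i))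
    (hfin : μ (⋃ i ∈ T, f i) ≠ ∞) : T.Countable := by
  have := Measure.countable_meas_pos_of_disjoint_of_meas_iUnion_ne_top μ
    (As := fun i : T ↦ f i) (fun i ↦ hf i i.2)
    (fun i j hij ↦ hd i.2 j.2 (Subtype.coe_injective.ne hij)) (by rwa [iUnion_subtype])
  rwa [show {i : T | 0 < μ (f i)} = univ from eq_univ_of_forall fun i ↦ hpos i i.2,
    countable_univ_iff, countable_coe_iff] at this

namespace DoublingAtScale

variable {X : Type*} [MetricSpace X] [MeasurableSpace X] {μ : Measure X} {κ : ℝ} {R : ℝ≥0∞}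

lemma measure_ball_two_pow_mul_le_s3 (h : DoublingAtScale μ κ R) (x : X) {ε : ℝ} (hε : 0 < ε)
    (n : ℕ) (hnR : ENNReal.ofReal (2 ^ n * ε) ≤ R) :
    μ (ball x (2 ^ (n + 1) * ε)) ≤ ENNReal.ofReal κ ^ (n + 1) * μ (ball x ε) := by
  induction n with
  | zero => simpa using h x ε hε (by simpa using hnR)
  | succ n ih =>
    have hn : ENNReal.ofReal (2 ^ n * ε) ≤ R :=
      le_trans (ENNReal.ofReal_le_ofReal (by gcongr; exacts [by norm_num, by omega])) hnR
    calc μ (ball x (2 ^ (n + 2) * ε)) = μ (ball x (2 * (2 ^ (n + 1) * ε))) := by ring_nf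
      _ ≤ ENNReal.ofReal κ * μ (ball x (2 ^ (n + 1) * ε)) := h x _ (by positivity) hnR
      _ ≤ ENNReal.ofReal κ * (ENNReal.ofReal κ ^ (n + 1) * μ (ball x ε)) := by gcongr; exact ih hn
      _ = ENNReal.ofReal κ ^ (n + 2) * μ (ball x ε) := by ring

lemma measure_le_of_pairwiseDisjoint_ball [OpensMeasurableSpace X] (h : DoublingAtScale μ κ R)
    {ι : Type*} {T : Set ι} (hT : T.Countable) (z : ι → X) {ε : ℝ} (hε : 0 < ε) (n : ℕ)
    (hnR : ENNReal.ofReal (2 ^ n * ε) ≤ R) (hd : T.PairwiseDisjoint fun t ↦ ball (z t) ε)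
    {s A : Set X} (hs : s ⊆ ⋃ t ∈ T, ball (z t) (2 ^ (n + 1) * ε))
    (hA : ∀ t ∈ T, ball (z t) ε ⊆ A) :
    μ s ≤ ENNReal.ofReal κ ^ (n + 1) * μ A :=
  calc μ s ≤ ∑' t : T, μ (ball (z t) (2 ^ (n + 1) * ε)) :=
        (measure_mono hs).trans (measure_biUnion_le μ hT _)
    _ ≤ ∑' t : T, ENNReal.ofReal κ ^ (n + 1) * μ (ball (z t) ε) :=
        ENNReal.tsum_le_tsum fun t ↦ h.measure_ball_two_pow_mul_le_s3 (z t) hε n hnR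
    _ = ENNReal.ofReal κ ^ (n + 1) * μ (⋃ t ∈ T, ball (z t) ε) := by
        rw [ENNReal.tsum_mul_left, measure_biUnion hT hd fun _ _ ↦ measurableSet_ball]
    _ ≤ ENNReal.ofReal κ ^ (n + 1) * μ A := by gcongr; exact iUnion₂_subset hA

end DoublingAtScale

lemma measure_sphere_le_measure_annulus {X : Type*} [MetricSpace X] [MeasurableSpace X]
    [OpensMeasurableSpace X] {μ : Measure X} {κ : ℝ} {R : ℝ≥0∞} (hball : BallMeasureNontrivial μ)
    (hgeo : IsGeodesicSpace X) (hdoub : DoublingAtScale μ κ R) (x : X) {r ε : ℝ} (hε : 0 < ε)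
    (hεr : ε ≤ r) (hεR : ENNReal.ofReal (4 * ε) ≤ R) :
    μ (sphere x r) ≤ ENNReal.ofReal κ ^ 3 * μ (ball x r \ closedBall x (r - 2 * ε)) := by
  set δ : ℝ≥0 := ⟨4 * ε, by positivity⟩
  obtain ⟨T, hTmax⟩ := exists_maximal_isSeparated δ (sphere x r)
  have hTsep : ∀ t ∈ T, ∀ t' ∈ T, t ≠ t' → 4 * ε < dist t t' := fun t ht t' ht' hne ↦ by
    have : (δ : ℝ≥0∞) < edist t t' := hTmax.1.2 ht ht' hne
    rwa [edist_nndist, ENNReal.coe_lt_coe, ← NNReal.coe_lt_coe, coe_nndist] at this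
  have hcover : sphere x r ⊆ ⋃ t ∈ T, closedBall t (4 * ε) :=
    (IsCover.of_maximal_isSeparated hTmax).subset_iUnion_closedBall
  have hpush : ∀ t ∈ T, ∃ z, dist x z = r - ε ∧ dist z t = ε := fun t ht ↦ by
    have hxt : dist x t = r := by rw [dist_comm]; exact hTmax.1.1 ht
    simpa [hxt] using hgeo.exists_dist_eq_s3 x t (sub_nonneg.2 hεr) (by linarith)
  choose! z hzx hzt using hpush
  have hd : T.PairwiseDisjoint fun t ↦ ball (z t) ε := fun t ht t' ht' hne ↦
    ball_disjoint_ball <| by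
      have := dist_triangle4 t (z t) (z t') t'
      linarith [hTsep t ht t' ht' hne, dist_comm t (z t), hzt t ht, hzt t' ht']
  have hA : ∀ t ∈ T, ball (z t) ε ⊆ ball x r \ closedBall x (r - 2 * ε) := fun t ht w hw ↦ by
    rw [mem_ball] at hw
    have h₁ := dist_triangle x w (z t)
    have h₂ := dist_triangle w (z t) x
    refine ⟨?_, ?_⟩
    · rw [mem_ball]; linarith [hzx t ht, dist_comm (z t) x]
    · rw [mem_closedBall, not_le, dist_comm]; linarith [hzx t ht, dist_comm w (z t)]
  have hTcount : T.Countable :=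
    hd.countable_of_measure_pos (fun _ _ ↦ measurableSet_ball)
      (fun t _ ↦ (hball (z t) ε hε).1) <| ne_top_of_le_ne_top (hball x r (hε.trans_le hεr)).2.ne
        (measure_mono <| iUnion₂_subset fun t ht ↦ (hA t ht).trans sdiff_subset)
  refine hdoub.measure_le_of_pairwiseDisjoint_ball hTcount z hε 2
    (by rwa [show (2 : ℝ) ^ 2 * ε = 4 * ε by ring]) hd
    (hcover.trans <| iUnion₂_mono fun t ht ↦ closedBall_subset_ball' ?_) hA
  norm_num; linarith [hzt t ht, dist_comm t (z t)]

lemma tendsto_measure_ball_diff_closedBall {X : Type*} [PseudoMetricSpace X] [MeasurableSpace X]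
    [OpensMeasurableSpace X] {μ : Measure X} (x : X) {r : ℝ} (hr : μ (ball x r) ≠ ∞) :
    Tendsto (fun δ ↦ μ (ball x r \ closedBall x (r - δ))) (𝓝[>] 0) (𝓝 0) := by
  have hempty : ⋂ δ > 0, ball x r \ closedBall x (r - δ) = ∅ := by
    refine eq_empty_of_forall_notMem fun y hy ↦ ?_
    have hyr : dist y x < r := mem_ball.1 (mem_iInter₂.1 hy 1 one_pos).1
    exact (mem_iInter₂.1 hy (r - dist y x) (by linarith)).2 (by simp)
  have := tendsto_measure_biInter_gt (μ := μ) (a := 0)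
    (s := fun δ ↦ ball x r \ closedBall x (r - δ))
    (fun _ _ ↦ (measurableSet_ball.diff measurableSet_closedBall).nullMeasurableSet)
    (fun _ _ _ hij ↦ sdiff_subset_sdiff_right (closedBall_subset_closedBall (by linarith)))
    ⟨1, one_pos, ne_top_of_le_ne_top hr (measure_mono sdiff_subset)⟩
  rwa [hempty, measure_empty] at this

theorem spheres_are_null_general {X : Type*} [MetricSpace X] [MeasurableSpace X] [BorelSpace X]
    (μ : Measure X) (κ R : ℝ) (hR : 0 < R)
    (hball : BallMeasureNontrivial μ) (hgeo : IsGeodesicSpace X)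
    (hdoub : DoublingAtScale μ κ (ENNReal.ofReal R)) :
    ∀ (x : X) (r : ℝ), 0 < r →
      μ (sphere x r) = 0 ∧ μ (frontier (ball x r)) = 0 := by
  intro x r hr
  have hdouble : Tendsto (fun ε : ℝ ↦ 2 * ε) (𝓝[>] 0) (𝓝[>] 0) := by
    simpa using (continuous_const_mul (2 : ℝ)).continuousWithinAt.tendsto_nhdsWithin
      (s := Ioi 0) (t := Ioi 0) (x := 0) fun ε (hε : 0 < ε) ↦ mul_pos two_pos hε
  have hlim : Tendsto (fun ε ↦ ENNReal.ofReal κ ^ 3 * μ (ball x r \ closedBall x (r - 2 * ε)))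
      (𝓝[>] 0) (𝓝 0) := by
    simpa using ENNReal.Tendsto.const_mul
      ((tendsto_measure_ball_diff_closedBall x (hball x r hr).2.ne).comp hdouble)
      (Or.inr (by finiteness))
  have hbound : ∀ᶠ ε in 𝓝[>] 0,
      μ (sphere x r) ≤ ENNReal.ofReal κ ^ 3 * μ (ball x r \ closedBall x (r - 2 * ε)) := by
    filter_upwards [Ioo_mem_nhdsGT (lt_min hr (by positivity : 0 < R / 4))] with ε ⟨hε, hεmin⟩
    exact measure_sphere_le_measure_annulus hball hgeo hdoub x hε
      (hεmin.le.trans (min_le_left _ _))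
      (ENNReal.ofReal_le_ofReal (by linarith [min_le_right r (R / 4)]))
  have hsphere : μ (sphere x r) = 0 := nonpos_iff_eq_zero.1 (ge_of_tendsto hlim hbound)
  exact ⟨hsphere, measure_mono_null frontier_ball_subset_sphere hsphere⟩

/-- In a geodesic metric measure space which is `κ`-doubling at a finite scale `R`,
every metric sphere is `μ`-null; in particular the boundary of every open ball is null. -/
theorem spheres_are_null {X : Type*} [MetricSpace X] [MeasurableSpace X] [BorelSpace X]
    (μ : Measure X) (κ R : ℝ) (hκ : 1 ≤ κ) (hR : 0 < R)
    (hball : BallMeasureNontrivial μ) (hgeo : IsGeodesicSpace X)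
    (hdoub : DoublingAtScale μ κ (ENNReal.ofReal R)) :
    ∀ (x : X) (r : ℝ), 0 < r →
      μ (sphere x r) = 0 ∧ μ (frontier (ball x r)) = 0 :=
  spheres_are_null_general μ κ R hR hball hgeo hdoub
end

section
/- Let n > 0 be a real number and let (X,d,μ) be a proper geodesic metric measure space that is κ-doubling at scale R ∈ (0,∞). Then there exist constants a > 0 depending only on n and A > 0 depending only on n and κ such that for every x ∈asp X and every s ∈ (0, R²]: a·μ(B_{√s}(x))/s^{n/2} ≤ Θ_x(s) ≤ A·μ(B_{√s}(x))/s^{n/2}. -/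
open MeasureTheory Metric Filter Set
open scoped ENNReal

/-- The `Θ`-volume `Θ_x(s) = (4πs)^{-n/2} ∫_X exp(−d(x,y)²/(4s)) dμ(y)`,
as an extended nonnegative real. -/
noncomputable def Theta {X : Type*} [MetricSpace X] [MeasurableSpace X] (μ : Measure X)
    (n : ℝ) (x : X) (s : ℝ) : ℝ≥0∞ :=
  ENNReal.ofReal ((4 * Real.pi * s) ^ (-(n / 2))) *
    ∫⁻ y, ENNReal.ofReal (Real.exp (-(dist x y) ^ 2 / (4 * s))) ∂μ

/-!
The lower bound comes from restricting the Gaussian to `B(x, √s)`, where it is at least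
`exp (-1/4)`. For the upper bound, split `X` into the annuli `k √s ≤ d(x, ·) < (k + 1) √s`, on
which the Gaussian is at most `exp (-k² / 4)`. In a geodesic space, doubling at scales `≤ R`
gives growth at all larger radii: the annulus `ρ ≤ d(x, ·) < ρ + r` lies within `2r` of a
maximal family of points on the sphere of radius `ρ - r / 2` whose `r / 4`-balls are disjoint
and contained in `B(x, ρ)`, so `μ(B(x, ρ + r)) ≤ (1 + κ³) μ(B(x, ρ))`. The Gaussian decay
`exp (-k² / 4)` beats the geometric growth `(1 + κ³)ᵏ`.
-/

theorem exists_pairwiseDisjoint_ball_forall_exists_dist_lt {X : Type*} [MetricSpace X]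
    (S : Set X) {ρ : ℝ} (hρ : 0 < ρ) :
    ∃ Z ⊆ S, Z.PairwiseDisjoint (ball · ρ) ∧ ∀ y ∈ S, ∃ z ∈ Z, dist y z < 2 * ρ := by
  obtain ⟨Z, hZ⟩ := zorn_subset {Z | Z ⊆ S ∧ Z.PairwiseDisjoint (ball · ρ)}
    fun c hcS hc => ⟨⋃₀ c, ⟨sUnion_subset fun Z hZ => (hcS hZ).1,
      (hc.pairwiseDisjoint_sUnion _).2 fun Z hZ => (hcS hZ).2⟩, fun _ => subset_sUnion_of_mem⟩
  refine ⟨Z, hZ.prop.1, hZ.prop.2, fun y hy => ?_⟩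
  by_contra! hfar
  have hins : insert y Z ∈ {Z | Z ⊆ S ∧ Z.PairwiseDisjoint (ball · ρ)} :=
    ⟨insert_subset hy hZ.prop.1, hZ.prop.2.insert fun z hz _ =>
      ball_disjoint_ball (by linarith [hfar z hz])⟩
  have hyZ : y ∈ Z := hZ.eq_of_subset hins (subset_insert y Z) ▸ mem_insert y Z
  linarith [hfar y hyZ, dist_self y]

theorem IsGeodesicSpace.exists_dist_eq_sub {X : Type*} [MetricSpace X] (hgeo : IsGeodesicSpace X)
    (x y : X) {t : ℝ} (ht₀ : 0 ≤ t) (ht : t ≤ dist x y) :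
    ∃ z, dist x z = t ∧ dist z y = dist x y - t := by
  obtain ⟨γ, hγ₀, hγ₁, hγ⟩ := hgeo x y
  refine ⟨γ t, ?_, ?_⟩
  · rw [← hγ₀, hγ 0 ⟨le_rfl, dist_nonneg⟩ t ⟨ht₀, ht⟩, abs_sub_comm, abs_of_nonneg (by linarith),
      sub_zero]
  · rw [← hγ₁, hγ t ⟨ht₀, ht⟩ _ ⟨dist_nonneg, le_rfl⟩, abs_sub_comm, abs_of_nonneg (by linarith),
      hγ₁]

/- The `k`-th term is `(exp (-k / 4) * c) ^ k`, and `exp (-k / 4) * c → 0`. -/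
theorem summable_exp_neg_sq_div_four_mul_pow (c : ℝ) :
    Summable fun k : ℕ => Real.exp (-(k : ℝ) ^ 2 / 4) * c ^ k := by
  have hlim : Tendsto (fun k : ℕ => Real.exp (-((k : ℝ) / 4)) * c) atTop (nhds 0) := by
    simpa using ((Real.tendsto_exp_atBot.comp (tendsto_neg_atTop_atBot.comp
      (tendsto_natCast_atTop_atTop.atTop_div_const (by norm_num : (0 : ℝ) < 4)))).mul_const c)
  refine summable_geometric_two.of_norm_bounded_eventually_nat ?_
  filter_upwards [(hlim.norm.eventually (ge_mem_nhds (by norm_num : ‖(0 : ℝ)‖ < 1 / 2)))]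
    with k hk
  calc ‖Real.exp (-(k : ℝ) ^ 2 / 4) * c ^ k‖ = ‖Real.exp (-((k : ℝ) / 4)) * c‖ ^ k := by
        rw [← norm_pow, mul_pow, ← Real.exp_nat_mul]
        ring_nf
    _ ≤ (1 / 2) ^ k := pow_le_pow_left₀ (norm_nonneg _) hk k

section Gaussian

variable {X : Type*} [MetricSpace X] [MeasurableSpace X] [OpensMeasurableSpace X]
  (μ : Measure X) (x : X) {s : ℝ}

theorem ofReal_exp_neg_quarter_mul_measure_ball_le_lintegral (hs : 0 < s) :
    ENNReal.ofReal (Real.exp (-1 / 4)) * μ (ball x √s) ≤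
      ∫⁻ y, ENNReal.ofReal (Real.exp (-dist x y ^ 2 / (4 * s))) ∂μ := by
  rw [← lintegral_indicator_const measurableSet_ball]
  refine lintegral_mono (indicator_le fun y hy => ENNReal.ofReal_le_ofReal ?_)
  have hdist : dist x y ^ 2 ≤ s := by
    rw [← Real.sq_sqrt hs.le]
    exact pow_le_pow_left₀ dist_nonneg (mem_ball'.1 hy).le 2
  rw [Real.exp_le_exp, neg_div, neg_div, neg_le_neg_iff, div_le_div_iff₀ (by positivity)
    (by norm_num)]
  linarith

theorem lintegral_exp_neg_dist_sq_le_tsum (hs : 0 < s) :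
    ∫⁻ y, ENNReal.ofReal (Real.exp (-dist x y ^ 2 / (4 * s))) ∂μ ≤
      ∑' k : ℕ, ENNReal.ofReal (Real.exp (-(k : ℝ) ^ 2 / 4)) * μ (ball x ((k + 1) * √s)) := by
  have hr : 0 < √s := Real.sqrt_pos.2 hs
  calc ∫⁻ y, ENNReal.ofReal (Real.exp (-dist x y ^ 2 / (4 * s))) ∂μ
      ≤ ∫⁻ y, ∑' k : ℕ, (ball x ((k + 1) * √s)).indicator
          (fun _ => ENNReal.ofReal (Real.exp (-(k : ℝ) ^ 2 / 4))) y ∂μ := by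
        refine lintegral_mono fun y => le_trans ?_ (ENNReal.le_tsum ⌊dist x y / √s⌋₊)
        set k := ⌊dist x y / √s⌋₊
        have hlow : k * √s ≤ dist x y := (le_div_iff₀ hr).1 (Nat.floor_le (by positivity))
        have hup : dist x y < (k + 1) * √s := (div_lt_iff₀ hr).1 (Nat.lt_floor_add_one _)
        rw [indicator_of_mem (mem_ball'.2 hup)]
        refine ENNReal.ofReal_le_ofReal (Real.exp_le_exp.2 ?_)
        have hsq : (k : ℝ) ^ 2 * s ≤ dist x y ^ 2 := by
          rw [← Real.sq_sqrt hs.le, ← mul_pow]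
          exact pow_le_pow_left₀ (by positivity) hlow 2
        rw [neg_div, neg_div, neg_le_neg_iff, div_le_div_iff₀ (by norm_num) (by positivity)]
        linarith
    _ = ∑' k : ℕ, ENNReal.ofReal (Real.exp (-(k : ℝ) ^ 2 / 4)) * μ (ball x ((k + 1) * √s)) := by
        rw [lintegral_tsum fun k => (measurable_const.indicator measurableSet_ball).aemeasurable]
        simp_rw [lintegral_indicator_const measurableSet_ball]

end Gaussian

theorem theta_eq_div {X : Type*} [MetricSpace X] [MeasurableSpace X] (μ : Measure X) (n : ℝ)
    (x : X) {s : ℝ} (hs : 0 < s) :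
    Theta μ n x s = ENNReal.ofReal ((4 * Real.pi) ^ (-(n / 2))) *
      (∫⁻ y, ENNReal.ofReal (Real.exp (-dist x y ^ 2 / (4 * s))) ∂μ) /
        ENNReal.ofReal (s ^ (n / 2)) := by
  rw [Theta, Real.mul_rpow (by positivity) hs.le, ENNReal.ofReal_mul (by positivity),
    Real.rpow_neg hs.le, ENNReal.ofReal_inv_of_pos (by positivity), mul_right_comm]
  exact (div_eq_mul_inv _ _).symm

namespace DoublingAtScale

variable {X : Type*} [MetricSpace X] [MeasurableSpace X] {μ : Measure X} {κ R : ℝ}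

theorem measure_ball_two_pow_mul_le_s7 (hdbl : DoublingAtScale μ κ (ENNReal.ofReal R)) (z : X)
    {r : ℝ} (hr : 0 < r) (k : ℕ) (hkR : 2 ^ k * r ≤ 2 * R) :
    μ (ball z (2 ^ k * r)) ≤ ENNReal.ofReal κ ^ k * μ (ball z r) := by
  induction k with
  | zero => simp
  | succ k ih =>
    have hk : 2 ^ k * r ≤ R := by rw [pow_succ] at hkR; linarith
    have hpos : 0 < 2 ^ k * r := by positivity
    calc μ (ball z (2 ^ (k + 1) * r)) = μ (ball z (2 * (2 ^ k * r))) := by ring_nf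
      _ ≤ ENNReal.ofReal κ * μ (ball z (2 ^ k * r)) :=
        hdbl z _ hpos (ENNReal.ofReal_le_ofReal hk)
      _ ≤ ENNReal.ofReal κ * (ENNReal.ofReal κ ^ k * μ (ball z r)) := by
        gcongr; exact ih (by linarith)
      _ = ENNReal.ofReal κ ^ (k + 1) * μ (ball z r) := by ring

variable [OpensMeasurableSpace X] [TopologicalSpace.SeparableSpace X]

theorem measure_biUnion_ball_le (hdbl : DoublingAtScale μ κ (ENNReal.ofReal R)) {Z : Set X}
    {r : ℝ} (hr : 0 < r) (hrR : r ≤ R) (hZ : Z.PairwiseDisjoint (ball · (r / 4))) :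
    μ (⋃ z ∈ Z, ball z (2 * r)) ≤ ENNReal.ofReal κ ^ 3 * μ (⋃ z ∈ Z, ball z (r / 4)) := by
  have hZc : Z.Countable :=
    hZ.countable_of_isOpen (fun _ _ => isOpen_ball) fun z _ => nonempty_ball.2 (by positivity)
  calc μ (⋃ z ∈ Z, ball z (2 * r)) ≤ ∑' z : Z, μ (ball (z : X) (2 * r)) :=
        measure_biUnion_le μ hZc _
    _ ≤ ∑' z : Z, ENNReal.ofReal κ ^ 3 * μ (ball (z : X) (r / 4)) :=
        ENNReal.tsum_le_tsum fun z => by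
          convert hdbl.measure_ball_two_pow_mul_le_s7 z (by positivity : 0 < r / 4) 3
            (by linarith) using 3
          ring
    _ = ENNReal.ofReal κ ^ 3 * μ (⋃ z ∈ Z, ball z (r / 4)) := by
        rw [ENNReal.tsum_mul_left, measure_biUnion hZc hZ fun _ _ => measurableSet_ball]

theorem measure_ball_add_le (hκ : 0 ≤ κ) (hgeo : IsGeodesicSpace X)
    (hdbl : DoublingAtScale μ κ (ENNReal.ofReal R)) (x : X) {ρ r : ℝ} (hr : 0 < r)
    (hrR : r ≤ R) (hrρ : r ≤ ρ) :
    μ (ball x (ρ + r)) ≤ ENNReal.ofReal (1 + κ ^ 3) * μ (ball x ρ) := by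
  obtain ⟨Z, hZS, hZ, hnet⟩ := exists_pairwiseDisjoint_ball_forall_exists_dist_lt
    (sphere x (ρ - r / 2)) (by positivity : 0 < r / 4)
  have hcover : ball x (ρ + r) ⊆ ball x ρ ∪ ⋃ z ∈ Z, ball z (2 * r) := by
    intro y hy
    rw [mem_ball'] at hy
    by_cases hyρ : dist x y < ρ
    · exact Or.inl (mem_ball'.2 hyρ)
    obtain ⟨w, hxw, hwy⟩ := hgeo.exists_dist_eq_sub x y (t := ρ - r / 2) (by linarith)
      (by linarith)
    obtain ⟨z, hz, hwz⟩ := hnet w (mem_sphere'.2 hxw)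
    refine Or.inr (mem_biUnion hz (mem_ball.2 ?_))
    linarith [dist_triangle y w z, dist_comm y w]
  have hpack : ⋃ z ∈ Z, ball z (r / 4) ⊆ ball x ρ := by
    refine iUnion₂_subset fun z hz y hy => mem_ball'.2 ?_
    linarith [dist_triangle x z y, mem_sphere'.1 (hZS hz), mem_ball'.1 hy]
  calc μ (ball x (ρ + r)) ≤ μ (ball x ρ) + μ (⋃ z ∈ Z, ball z (2 * r)) :=
        (measure_mono hcover).trans (measure_union_le _ _)
    _ ≤ μ (ball x ρ) + ENNReal.ofReal κ ^ 3 * μ (ball x ρ) := by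
        grw [hdbl.measure_biUnion_ball_le hr hrR hZ, hpack]
    _ = ENNReal.ofReal (1 + κ ^ 3) * μ (ball x ρ) := by
        rw [ENNReal.ofReal_add zero_le_one (by positivity), ENNReal.ofReal_one,
          ENNReal.ofReal_pow hκ]
        ring

theorem measure_ball_nat_succ_mul_le (hκ : 0 ≤ κ) (hgeo : IsGeodesicSpace X)
    (hdbl : DoublingAtScale μ κ (ENNReal.ofReal R)) (x : X) {r : ℝ} (hr : 0 < r)
    (hrR : r ≤ R) (k : ℕ) :
    μ (ball x ((k + 1) * r)) ≤ ENNReal.ofReal ((1 + κ ^ 3) ^ k) * μ (ball x r) := by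
  induction k with
  | zero => simp
  | succ k ih =>
    calc μ (ball x ((↑(k + 1) + 1) * r)) = μ (ball x ((k + 1) * r + r)) := by push_cast; ring_nf
      _ ≤ ENNReal.ofReal (1 + κ ^ 3) * μ (ball x ((k + 1) * r)) :=
        hdbl.measure_ball_add_le hκ hgeo x hr hrR (by nlinarith [k.cast_nonneg (α := ℝ)])
      _ ≤ ENNReal.ofReal (1 + κ ^ 3) * (ENNReal.ofReal ((1 + κ ^ 3) ^ k) * μ (ball x r)) := by
        grw [ih]
      _ = ENNReal.ofReal ((1 + κ ^ 3) ^ (k + 1)) * μ (ball x r) := by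
        rw [← mul_assoc, ← ENNReal.ofReal_mul (by positivity), ← pow_succ']

theorem lintegral_exp_neg_dist_sq_le (hκ : 0 ≤ κ) (hgeo : IsGeodesicSpace X)
    (hdbl : DoublingAtScale μ κ (ENNReal.ofReal R)) (x : X) {s : ℝ} (hs : 0 < s)
    (hsR : √s ≤ R) :
    ∫⁻ y, ENNReal.ofReal (Real.exp (-dist x y ^ 2 / (4 * s))) ∂μ ≤
      ENNReal.ofReal (∑' k : ℕ, Real.exp (-(k : ℝ) ^ 2 / 4) * (1 + κ ^ 3) ^ k) *
        μ (ball x √s) := by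
  calc ∫⁻ y, ENNReal.ofReal (Real.exp (-dist x y ^ 2 / (4 * s))) ∂μ
      ≤ ∑' k : ℕ, ENNReal.ofReal (Real.exp (-(k : ℝ) ^ 2 / 4)) * μ (ball x ((k + 1) * √s)) :=
        lintegral_exp_neg_dist_sq_le_tsum μ x hs
    _ ≤ ∑' k : ℕ, ENNReal.ofReal (Real.exp (-(k : ℝ) ^ 2 / 4)) *
          (ENNReal.ofReal ((1 + κ ^ 3) ^ k) * μ (ball x √s)) := by
        gcongr with k
        exact hdbl.measure_ball_nat_succ_mul_le hκ hgeo x (Real.sqrt_pos.2 hs) hsR k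
    _ = ENNReal.ofReal (∑' k : ℕ, Real.exp (-(k : ℝ) ^ 2 / 4) * (1 + κ ^ 3) ^ k) *
          μ (ball x √s) := by
        simp_rw [← mul_assoc, ← ENNReal.ofReal_mul (Real.exp_nonneg _)]
        rw [ENNReal.tsum_mul_right, ENNReal.ofReal_tsum_of_nonneg (fun k => by positivity)
          (summable_exp_neg_sq_div_four_mul_pow _)]

end DoublingAtScale

theorem theta_volume_two_sided_general (n : ℝ) :
    ∃ a : ℝ, 0 < a ∧ ∀ κ : ℝ, 1 ≤ κ → ∃ A : ℝ, 0 < A ∧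
      ∀ (X : Type) [MetricSpace X] [MeasurableSpace X] [BorelSpace X]
        (μ : Measure X) (R : ℝ), 0 < R →
        ProperSpace X → BallMeasureNontrivial μ → IsGeodesicSpace X →
        DoublingAtScale μ κ (ENNReal.ofReal R) →
        ∀ (x : X) (s : ℝ), 0 < s → s ≤ R ^ 2 →
          ENNReal.ofReal a * μ (ball x (Real.sqrt s)) / ENNReal.ofReal (s ^ (n / 2)) ≤
              Theta μ n x s ∧
            Theta μ n x s ≤
              ENNReal.ofReal A * μ (ball x (Real.sqrt s)) / ENNReal.ofReal (s ^ (n / 2)) := by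
  refine ⟨(4 * Real.pi) ^ (-(n / 2)) * Real.exp (-1 / 4), by positivity, fun κ hκ => ?_⟩
  have hκ₀ : 0 ≤ κ := by linarith
  refine ⟨(4 * Real.pi) ^ (-(n / 2)) * ∑' k : ℕ, Real.exp (-(k : ℝ) ^ 2 / 4) * (1 + κ ^ 3) ^ k,
    mul_pos (by positivity) ((summable_exp_neg_sq_div_four_mul_pow _).tsum_pos
      (fun k => by positivity) 0 (by simp)), ?_⟩
  intro X _ _ _ μ R hR _ _ hgeo hdbl x s hs hsR
  have hrR : √s ≤ R := Real.sqrt_le_iff.2 ⟨hR.le, hsR⟩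
  rw [theta_eq_div μ n x hs, ENNReal.ofReal_mul (by positivity), ENNReal.ofReal_mul (by positivity),
    mul_assoc, mul_assoc]
  exact ⟨by grw [ofReal_exp_neg_quarter_mul_measure_ball_le_lintegral μ x hs],
    by grw [hdbl.lintegral_exp_neg_dist_sq_le hκ₀ hgeo x hs hrR]⟩

/-- Two-sided comparison: `a·μ(B_{√s}(x))/s^{n/2} ≤ Θ_x(s) ≤ A·μ(B_{√s}(x))/s^{n/2}` for
`s ∈ (0,R²]`, where `a` depends only on `n` and `A` only on `n` and `κ`. -/
theorem theta_volume_two_sided (n : ℝ) (hn : 0 < n) :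
    ∃ a : ℝ, 0 < a ∧ ∀ κ : ℝ, 1 ≤ κ → ∃ A : ℝ, 0 < A ∧
      ∀ (X : Type) [MetricSpace X] [MeasurableSpace X] [BorelSpace X]
        (μ : Measure X) (R : ℝ), 0 < R →
        ProperSpace X → BallMeasureNontrivial μ → IsGeodesicSpace X →
        DoublingAtScale μ κ (ENNReal.ofReal R) →
        ∀ (x : X) (s : ℝ), 0 < s → s ≤ R ^ 2 →
          ENNReal.ofReal a * μ (ball x (Real.sqrt s)) / ENNReal.ofReal (s ^ (n / 2)) ≤
              Theta μ n x s ∧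
            Theta μ n x s ≤
              ENNReal.ofReal A * μ (ball x (Real.sqrt s)) / ENNReal.ofReal (s ^ (n / 2)) :=
  theta_volume_two_sided_general n
end

section
/- Let (X,d,μ) be a proper metric measure space, let x ∈ X, and let T > 0, ν > 2 and λ > 0. Assume: (a) there exist c, Q > 0 such that μ(B_τ(x)) ≥ c·τ^Q for every τ ∈ (0, √T]; (b) for every r ∈ (0, √T] and every Lipschitz function φ : X → ℝ with compact support contained in B_r(x), the Sobolev inequality ( ∫_{B_r(x)} |φ|^{2ν/(ν−2)} dμ )^{1−2/ν} ≤ λ·r²·μ(B_r(x))^{−2/ν}·( ∫_{B_r(x)} (Lip φ)² dμ + r^{−2} ∫_{B_r(x)} |φ|² dμ ) holds. Then for all 0 < s ≤ r ≤ √T: μ(B_r(x))/r^ν ≤ (2^{ν+1}λ)^{ν/2} · μ(B_s(x))/s^ν. -/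
/-!
Testing the Sobolev inequality on `B_r(x)` against a Lipschitz cutoff that is `1` on `B_t(x)`
and vanishes outside `B_{2t}(x)` gives, for `V(u) = μ(B_u(x))`, `θ = 1 - 2/ν` and `2t ≤ r`,
the reverse doubling inequality `V(t)^θ ≤ 2λ(r/t)² V(r)^{-2/ν} V(2t)`.
Along the radii `s/2^m` the numbers `L_m = log V(s/2^m) - log V(r) ≤ 0` therefore satisfy
`θ L_{m+1} ≤ log(2λ(r/s)²) + 2(m+1) log 2 + L_m`. Unrolling this `M` times bounds `L_0` from
below by `θ^M L_M` minus a partial sum of a convergent arithmetico-geometric series, and the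
lower volume bound `V(τ) ≥ cτ^Q` makes `L_M` decrease at most linearly in `M`, so
`θ^M L_M → 0`. Summing the series gives the constant `(2^{ν+1}λ)^{ν/2}`.
-/

open MeasureTheory Metric Filter Set
open scoped ENNReal NNReal

/-- The local Lipschitz constant `Lip φ(y) = limsup_{z→y} |φ(y) − φ(z)|/d(y,z)`
(equal to `0` at isolated points, where the punctured neighbourhood filter is trivial). -/
noncomputable def locLip {X : Type*} [MetricSpace X] (φ : X → ℝ) (y : X) : ℝ :=
  Filter.limsup (fun z => |φ y - φ z| / dist y z) (nhdsWithin y ({y}ᶜ : Set X))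

open Topology Real

section LocLip

variable {X : Type*} [MetricSpace X] {φ : X → ℝ} {K : ℝ≥0}

theorem eventually_abs_sub_div_dist_le (hφ : LipschitzWith K φ) (y : X) :
    ∀ᶠ z in 𝓝[≠] y, |φ y - φ z| / dist y z ≤ K := by
  filter_upwards [self_mem_nhdsWithin] with z hz
  rw [div_le_iff₀ (dist_pos.2 (Ne.symm hz))]
  simpa [Real.dist_eq] using hφ.dist_le_mul y z

theorem locLip_le (hφ : LipschitzWith K φ) (y : X) : locLip φ y ≤ K := by
  rcases eq_or_neBot (𝓝[≠] y) with h | h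
  · simp [locLip, h, Filter.limsup, Filter.limsSup]
  · exact limsup_le_of_le (isCoboundedUnder_le_of_le _ fun z => by positivity)
      (eventually_abs_sub_div_dist_le hφ y)

theorem locLip_nonneg (hφ : LipschitzWith K φ) (y : X) : 0 ≤ locLip φ y := by
  rcases eq_or_neBot (𝓝[≠] y) with h | h
  · simp [locLip, h, Filter.limsup, Filter.limsSup]
  · exact le_limsup_of_frequently_le (Eventually.of_forall fun z => by positivity).frequently
      ⟨K, eventually_map.2 (eventually_abs_sub_div_dist_le hφ y)⟩

theorem locLip_eq_zero_of_notMem_tsupport {y : X} (hy : y ∉ tsupport φ) : locLip φ y = 0 := by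
  rcases eq_or_neBot (𝓝[≠] y) with h | h
  · simp [locLip, h, Filter.limsup, Filter.limsSup]
  have hzero : ∀ᶠ z in 𝓝[≠] y, |φ y - φ z| / dist y z = 0 := by
    filter_upwards [nhdsWithin_le_nhds (notMem_tsupport_iff_eventuallyEq.1 hy)] with z hz
    simp [image_eq_zero_of_notMem_tsupport hy, hz]
  rw [locLip, limsup_congr hzero, limsup_const]

end LocLip

section Cutoff

variable {X : Type*} [MetricSpace X] {x y : X} {a b : ℝ}

noncomputable def cutoff (x : X) (a b : ℝ) (y : X) : ℝ :=
  max 0 (min 1 ((b - dist y x) / (b - a)))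

theorem cutoff_nonneg : 0 ≤ cutoff x a b y := le_max_left _ _

theorem abs_cutoff_le_one : |cutoff x a b y| ≤ 1 := by
  rw [abs_of_nonneg cutoff_nonneg]
  exact max_le zero_le_one (min_le_left _ _)

theorem cutoff_eq_one (hab : a < b) (hy : dist y x ≤ a) : cutoff x a b y = 1 := by
  have : 1 ≤ (b - dist y x) / (b - a) := by rw [le_div_iff₀ (by linarith)]; linarith
  rw [cutoff, min_eq_left this, max_eq_right zero_le_one]

theorem cutoff_eq_zero (hab : a ≤ b) (hy : b ≤ dist y x) : cutoff x a b y = 0 :=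
  max_eq_left <| (min_le_right _ _).trans <| div_nonpos_of_nonpos_of_nonneg (by linarith)
    (by linarith)

theorem lipschitzWith_cutoff (hab : a ≤ b) :
    LipschitzWith (b - a)⁻¹.toNNReal (cutoff x a b) := by
  have hinv : 0 ≤ (b - a)⁻¹ := inv_nonneg.2 (by linarith)
  have affine : LipschitzWith (b - a)⁻¹.toNNReal fun y => (b - dist y x) / (b - a) := by
    refine LipschitzWith.of_dist_le_mul fun y z => ?_
    rw [Real.dist_eq, ← sub_div, sub_sub_sub_cancel_left, div_eq_inv_mul, abs_mul,
      abs_of_nonneg hinv, Real.coe_toNNReal _ hinv]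
    exact mul_le_mul_of_nonneg_left (by simpa [abs_sub_comm] using abs_dist_sub_le y z x) hinv
  exact (affine.const_min 1).const_max 0

theorem tsupport_cutoff_subset (hab : a ≤ b) : tsupport (cutoff x a b) ⊆ closedBall x b :=
  closure_minimal (fun _ hy => by_contra fun h => hy (cutoff_eq_zero hab (not_le.1 h).le))
    isClosed_closedBall

theorem hasCompactSupport_cutoff [ProperSpace X] (hab : a ≤ b) :
    HasCompactSupport (cutoff x a b) :=
  (isCompact_closedBall x b).of_isClosed_subset (isClosed_tsupport _) (tsupport_cutoff_subset hab)

end Cutoff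

section Integrals

theorem setIntegral_le_mul_measureReal_of_sdiff_eq_zero {X : Type*} [MeasurableSpace X]
    {μ : Measure X} {f : X → ℝ} {s t : Set X} {C : ℝ} (ht : MeasurableSet t) (hst : s ⊆ t)
    (hs : μ s < ∞) (hzero : ∀ y ∈ t \ s, f y = 0) (hC : ∀ y ∈ s, |f y| ≤ C) :
    ∫ y in t, f y ∂μ ≤ C * μ.real s := by
  rw [setIntegral_eq_of_subset_of_forall_sdiff_eq_zero ht hst hzero]
  exact (Real.le_norm_self _).trans <| norm_setIntegral_le_of_norm_le_const hs fun y hy =>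
    (Real.norm_eq_abs _).trans_le (hC y hy)

variable {X : Type*} [MetricSpace X] [MeasurableSpace X] [BorelSpace X] {μ : Measure X} {x : X}

theorem measureReal_ball_le_setIntegral_cutoff {p a b r : ℝ} (hp : 0 ≤ p) (hab : a < b)
    (har : a ≤ r) (hr : μ (ball x r) ≠ ∞) :
    μ.real (ball x a) ≤ ∫ y in ball x r, |cutoff x a b y| ^ p ∂μ := by
  have hint : IntegrableOn (fun y => |cutoff x a b y| ^ p) (ball x r) μ :=
    Measure.integrableOn_of_bounded (M := 1) hr
      ((lipschitzWith_cutoff hab.le).continuous.abs.rpow_const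
        fun _ => Or.inr hp).aestronglyMeasurable
      (Eventually.of_forall fun y => by
        rw [Real.norm_of_nonneg (by positivity)]
        exact Real.rpow_le_one (abs_nonneg _) abs_cutoff_le_one hp)
  calc μ.real (ball x a) = ∫ y in ball x a, |cutoff x a b y| ^ p ∂μ := by
        rw [setIntegral_congr_fun measurableSet_ball fun y hy => by
          rw [cutoff_eq_one hab (mem_ball.1 hy).le, abs_one, Real.one_rpow]]
        simp
    _ ≤ ∫ y in ball x r, |cutoff x a b y| ^ p ∂μ :=
        setIntegral_mono_set hint (Eventually.of_forall fun y => by positivity)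
          (ball_subset_ball har).eventuallyLE

end Integrals

theorem measure_ball_rpow_le_of_sobolev {X : Type*} [MetricSpace X] [MeasurableSpace X]
    [BorelSpace X] [ProperSpace X] {μ : Measure X} {x : X} {ν lam r t : ℝ} (hν : 2 < ν)
    (hlam : 0 ≤ lam) (ht : 0 < t) (htr : 2 * t ≤ r) (hr : μ (ball x r) ≠ ∞)
    (hSob : ∀ φ : X → ℝ,
      (∃ K : ℝ≥0, LipschitzWith K φ) → HasCompactSupport φ → tsupport φ ⊆ ball x r →
      (∫ y in ball x r, |φ y| ^ (2 * ν / (ν - 2)) ∂μ) ^ (1 - 2 / ν) ≤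
        lam * r ^ 2 * (μ (ball x r)).toReal ^ (-(2 / ν)) *
          ((∫ y in ball x r, locLip φ y ^ 2 ∂μ) +
            (∫ y in ball x r, |φ y| ^ 2 ∂μ) / r ^ 2)) :
    (μ (ball x t)).toReal ^ (1 - 2 / ν) ≤
      2 * lam * (r / t) ^ 2 * (μ (ball x r)).toReal ^ (-(2 / ν)) *
        (μ (ball x (2 * t))).toReal := by
  -- The slope `5/(4t)` of this cutoff is small enough that `r²(5/(4t))² + 1 ≤ 2(r/t)²`
  -- whenever `r ≥ 2t`.
  set φ := cutoff x t (9 * t / 5)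
  set W := (μ (ball x (2 * t))).toReal
  have hφ : LipschitzWith (5 / (4 * t)).toNNReal φ := by
    convert lipschitzWith_cutoff (x := x) (by linarith : t ≤ 9 * t / 5) using 2
    field_simp; ring
  have hsupp : tsupport φ ⊆ ball x (2 * t) :=
    (tsupport_cutoff_subset (by linarith)).trans (closedBall_subset_ball (by linarith))
  have h2tr : ball x (2 * t) ⊆ ball x r := ball_subset_ball htr
  have hfin : μ (ball x (2 * t)) < ∞ := (measure_mono h2tr).trans_lt hr.lt_top
  have hoff : ∀ y ∈ ball x r \ ball x (2 * t), y ∉ tsupport φ := fun y hy h => hy.2 (hsupp h)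
  have hgrad : ∫ y in ball x r, locLip φ y ^ 2 ∂μ ≤ (5 / (4 * t)) ^ 2 * W :=
    setIntegral_le_mul_measureReal_of_sdiff_eq_zero measurableSet_ball h2tr hfin
      (fun y hy => by simp [locLip_eq_zero_of_notMem_tsupport (hoff y hy)])
      fun y _ => by
        rw [abs_of_nonneg (sq_nonneg _)]
        exact pow_le_pow_left₀ (locLip_nonneg hφ y)
          ((locLip_le hφ y).trans_eq (Real.coe_toNNReal _ (by positivity))) 2
  have hL2 : ∫ y in ball x r, |φ y| ^ 2 ∂μ ≤ 1 * W :=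
    setIntegral_le_mul_measureReal_of_sdiff_eq_zero measurableSet_ball h2tr hfin
      (fun y hy => by simp [image_eq_zero_of_notMem_tsupport (hoff y hy)])
      fun y _ => by
        rw [abs_of_nonneg (sq_nonneg _)]
        exact pow_le_one₀ (abs_nonneg _) abs_cutoff_le_one
  have hmass := measureReal_ball_le_setIntegral_cutoff (μ := μ) (p := 2 * ν / (ν - 2))
    (div_nonneg (by linarith) (by linarith)) (by linarith : t < 9 * t / 5) (by linarith) hr
  have hθ : 0 ≤ 1 - 2 / ν := by rw [sub_nonneg, div_le_one (by linarith)]; linarith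
  have hratio : 2 ≤ r / t := (le_div_iff₀ ht).2 (by linarith)
  have hr0 : r ≠ 0 := (by linarith : 0 < r).ne'
  calc (μ (ball x t)).toReal ^ (1 - 2 / ν)
      ≤ (∫ y in ball x r, |φ y| ^ (2 * ν / (ν - 2)) ∂μ) ^ (1 - 2 / ν) :=
        Real.rpow_le_rpow ENNReal.toReal_nonneg hmass hθ
    _ ≤ _ := hSob φ ⟨_, hφ⟩ (hasCompactSupport_cutoff (by linarith))
        (hsupp.trans h2tr)
    _ ≤ lam * r ^ 2 * (μ (ball x r)).toReal ^ (-(2 / ν)) *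
          ((5 / (4 * t)) ^ 2 * W + 1 * W / r ^ 2) := by gcongr
    _ = lam * (μ (ball x r)).toReal ^ (-(2 / ν)) * W * (25 / 16 * (r / t) ^ 2 + 1) := by
        field_simp; ring
    _ ≤ lam * (μ (ball x r)).toReal ^ (-(2 / ν)) * W * (2 * (r / t) ^ 2) := by
        gcongr; nlinarith
    _ = _ := by ring

theorem neg_le_of_contracting_recursion {θ S : ℝ} {L a : ℕ → ℝ} (hθ : 0 ≤ θ)
    (hrec : ∀ m, θ * L (m + 1) ≤ a m + L m) (ha : HasSum (fun j => θ ^ j * a j) S)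
    (hL : Tendsto (fun M => θ ^ M * L M) atTop (𝓝 0)) : -S ≤ L 0 := by
  have unrolled : ∀ M, θ ^ M * L M - ∑ j ∈ Finset.range M, θ ^ j * a j ≤ L 0 := by
    intro M
    induction M with
    | zero => simp
    | succ M ih =>
      have := mul_le_mul_of_nonneg_left (hrec M) (pow_nonneg hθ M)
      rw [Finset.sum_range_succ]
      linear_combination ih + this
  simpa using le_of_tendsto' (hL.sub ha.tendsto_sum_nat) unrolled

theorem tendsto_pow_mul_of_linear_lower_bound {θ D E : ℝ} {L : ℕ → ℝ} (hθ0 : 0 ≤ θ)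
    (hθ1 : θ < 1) (hlow : ∀ m : ℕ, D - m * E ≤ L m) (hup : ∀ m, L m ≤ 0) :
    Tendsto (fun m => θ ^ m * L m) atTop (𝓝 0) := by
  have hθ : ‖θ‖ < 1 := by rwa [Real.norm_of_nonneg hθ0]
  have hbound : Tendsto (fun m : ℕ => θ ^ m * D - (m * θ ^ m) * E) atTop (𝓝 0) := by
    simpa using ((tendsto_pow_atTop_nhds_zero_of_lt_one hθ0 hθ1).mul_const D).sub
      ((hasSum_coe_mul_geometric_of_norm_lt_one hθ).summable.tendsto_atTop_zero.mul_const E)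
  refine tendsto_of_tendsto_of_tendsto_of_le_of_le hbound tendsto_const_nhds (fun m => ?_)
    fun m => mul_nonpos_of_nonneg_of_nonpos (pow_nonneg hθ0 m) (hup m)
  linear_combination mul_le_mul_of_nonneg_left (hlow m) (pow_nonneg hθ0 m)

theorem hasSum_pow_mul_add_succ_mul {θ : ℝ} (a b : ℝ) (hθ0 : 0 ≤ θ) (hθ1 : θ < 1) :
    HasSum (fun j : ℕ => θ ^ j * (a + (j + 1) * b)) (a / (1 - θ) + b / (1 - θ) ^ 2) := by
  have hθ : ‖θ‖ < 1 := by rwa [Real.norm_of_nonneg hθ0]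
  have h := ((hasSum_geometric_of_lt_one hθ0 hθ1).mul_right a).add
    ((hasSum_choose_mul_geometric_of_norm_lt_one 1 hθ).mul_right b)
  simp only [Nat.choose_one_right] at h
  push_cast at h
  rw [show a / (1 - θ) + b / (1 - θ) ^ 2 = (1 - θ)⁻¹ * a + 1 / (1 - θ) ^ 2 * b by ring]
  exact h.congr_fun fun j => by ring

theorem mul_log_sub_le_of_rpow_le {a b w C θ : ℝ} (ha : 0 < a) (hb : 0 < b) (hw : 0 < w)
    (hC : 0 < C) (h : a ^ θ ≤ C * w ^ (θ - 1) * b) :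
    θ * (log a - log w) ≤ log C + (log b - log w) := by
  have := Real.log_le_log (by positivity) h
  rw [Real.log_rpow ha, Real.log_mul (by positivity) hb.ne', Real.log_mul hC.ne' (by positivity),
    Real.log_rpow hw] at this
  linear_combination this

theorem log_sub_log_le_of_reverse_doubling {V : ℝ → ℝ} {ν lam c Q s r : ℝ} (hν : 2 < ν)
    (hlam : 0 < lam) (hc : 0 < c) (hs : 0 < s) (hsr : s ≤ r) (hpos : ∀ u, 0 < u → 0 < V u)
    (hmono : ∀ u ≤ s, V u ≤ V r) (hlow : ∀ u, 0 < u → u ≤ s → c * u ^ Q ≤ V u)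
    (hstep : ∀ t, 0 < t → 2 * t ≤ r →
      V t ^ (1 - 2 / ν) ≤ 2 * lam * (r / t) ^ 2 * V r ^ (-(2 / ν)) * V (2 * t)) :
    log (V r) - log (V s) ≤ ν / 2 * log (2 * lam * (r / s) ^ 2) + ν ^ 2 / 2 * log 2 := by
  set θ := 1 - 2 / ν
  set K := log (2 * lam * (r / s) ^ 2)
  set L : ℕ → ℝ := fun m => log (V (s / 2 ^ m)) - log (V r)
  have hr : 0 < r := hs.trans_le hsr
  have hrad : ∀ m : ℕ, 0 < s / 2 ^ m ∧ s / 2 ^ m ≤ s := fun m =>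
    ⟨by positivity, div_le_self hs.le (one_le_pow₀ one_le_two)⟩
  have hrec : ∀ m : ℕ, θ * L (m + 1) ≤ (K + (m + 1) * (2 * log 2)) + L m := by
    intro m
    have hdouble : 2 * (s / 2 ^ (m + 1)) = s / 2 ^ m := by rw [pow_succ]; field_simp
    have hstep_m := hstep _ (hrad (m + 1)).1 (hdouble ▸ (hrad m).2.trans hsr)
    have hconst : 2 * lam * (r / (s / 2 ^ (m + 1))) ^ 2 =
        2 * lam * (r / s) ^ 2 * (2 ^ (m + 1)) ^ 2 := by field_simp
    rw [hdouble, hconst, show -(2 / ν) = θ - 1 by ring] at hstep_m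
    have := mul_log_sub_le_of_rpow_le (hpos _ (hrad (m + 1)).1) (hpos _ (hrad m).1) (hpos r hr)
      (by positivity) hstep_m
    rw [Real.log_mul (by positivity) (by positivity), Real.log_pow, Real.log_pow] at this
    push_cast at this
    linear_combination this
  have hlowL : ∀ m : ℕ, (log c + Q * log s - log (V r)) - m * (Q * log 2) ≤ L m := by
    intro m
    obtain ⟨hu, hus⟩ := hrad m
    have := Real.log_le_log (by positivity) (hlow _ hu hus)
    rw [Real.log_mul hc.ne' (by positivity), Real.log_rpow hu,
      Real.log_div hs.ne' (by positivity), Real.log_pow] at this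
    linear_combination this
  have hupL : ∀ m, L m ≤ 0 := fun m =>
    sub_nonpos.2 (Real.log_le_log (hpos _ (hrad m).1) (hmono _ (hrad m).2))
  have hθ0 : 0 ≤ θ := by rw [sub_nonneg, div_le_one (by linarith)]; linarith
  have hθ1 : θ < 1 := by linarith [show 0 < 2 / ν by positivity]
  have := neg_le_of_contracting_recursion hθ0 hrec (hasSum_pow_mul_add_succ_mul _ _ hθ0 hθ1)
    (tendsto_pow_mul_of_linear_lower_bound hθ0 hθ1 hlowL hupL)
  simp only [L, pow_zero, div_one, show 1 - θ = 2 / ν by ring] at this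
  have hν0 : ν ≠ 0 := by positivity
  rw [show K / (2 / ν) = ν / 2 * K by field_simp,
    show 2 * log 2 / (2 / ν) ^ 2 = ν ^ 2 / 2 * log 2 by field_simp] at this
  linarith

theorem div_rpow_le_of_log_sub_log_le {A B ν lam r s : ℝ} (hA : 0 < A) (hB : 0 < B)
    (hlam : 0 < lam) (hr : 0 < r) (hs : 0 < s)
    (h : log A - log B ≤ ν / 2 * log (2 * lam * (r / s) ^ 2) + ν ^ 2 / 2 * log 2) :
    A / r ^ ν ≤ (2 ^ (ν + 1) * lam) ^ (ν / 2) * (B / s ^ ν) := by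
  rw [← Real.log_le_log_iff (by positivity) (by positivity), Real.log_div hA.ne' (by positivity),
    Real.log_mul (by positivity) (by positivity), Real.log_div hB.ne' (by positivity),
    Real.log_rpow hr, Real.log_rpow hs, Real.log_rpow (by positivity),
    Real.log_mul (by positivity) hlam.ne', Real.log_rpow two_pos]
  rw [Real.log_mul (by positivity) (by positivity), Real.log_mul two_ne_zero hlam.ne',
    Real.log_pow, Real.log_div hr.ne' hs.ne'] at h
  push_cast at h
  linear_combination h

theorem volume_ratio_from_sobolev_general {X : Type*} [MetricSpace X] [MeasurableSpace X]
    [BorelSpace X] [ProperSpace X] (μ : Measure X) (hball : BallMeasureNontrivial μ)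
    (x : X) (T ν lam : ℝ) (hν : 2 < ν) (hlam : 0 < lam)
    -- (a) lower volume bound
    (c Q : ℝ) (hc : 0 < c)
    (hlow : ∀ τ : ℝ, 0 < τ → τ ≤ Real.sqrt T → ENNReal.ofReal (c * τ ^ Q) ≤ μ (ball x τ))
    -- (b) Sobolev inequality on balls centered at x with radius at most √T
    (hSob : ∀ r : ℝ, 0 < r → r ≤ Real.sqrt T → ∀ φ : X → ℝ,
      (∃ K : ℝ≥0, LipschitzWith K φ) → HasCompactSupport φ → tsupport φ ⊆ ball x r →
      (∫ y in ball x r, |φ y| ^ (2 * ν / (ν - 2)) ∂μ) ^ (1 - 2 / ν) ≤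
        lam * r ^ 2 * (μ (ball x r)).toReal ^ (-(2 / ν)) *
          ((∫ y in ball x r, locLip φ y ^ 2 ∂μ) +
            (∫ y in ball x r, |φ y| ^ 2 ∂μ) / r ^ 2)) :
    ∀ s r : ℝ, 0 < s → s ≤ r → r ≤ Real.sqrt T →
      (μ (ball x r)).toReal / r ^ ν ≤
        ((2 : ℝ) ^ (ν + 1) * lam) ^ (ν / 2) * ((μ (ball x s)).toReal / s ^ ν) := by
  intro s r hs hsr hrT
  have hr : 0 < r := hs.trans_le hsr
  have hpos : ∀ u, 0 < u → 0 < (μ (ball x u)).toReal := fun u hu =>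
    ENNReal.toReal_pos (hball x u hu).1.ne' (hball x u hu).2.ne
  have hmono : ∀ u ≤ s, (μ (ball x u)).toReal ≤ (μ (ball x r)).toReal :=
    fun u hus => ENNReal.toReal_mono (hball x r hr).2.ne
      (measure_mono (ball_subset_ball (hus.trans hsr)))
  have hlowV : ∀ u, 0 < u → u ≤ s → c * u ^ Q ≤ (μ (ball x u)).toReal := fun u hu hus =>
    (ENNReal.ofReal_le_iff_le_toReal (hball x u hu).2.ne).1
      (hlow u hu (hus.trans (hsr.trans hrT)))
  exact div_rpow_le_of_log_sub_log_le (hpos r hr) (hpos s hs) hlam hr hs <|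
    log_sub_log_le_of_reverse_doubling (V := fun u => (μ (ball x u)).toReal) hν hlam hc hs hsr
      hpos hmono hlowV fun t ht htr =>
        measure_ball_rpow_le_of_sobolev hν hlam.le ht htr (hball x r hr).2.ne (hSob r hr hrT)

/-- Iteration of a local Sobolev inequality yields the volume monotonicity
`μ(B_r(x))/r^ν ≤ (2^{ν+1}λ)^{ν/2}·μ(B_s(x))/s^ν` for `0 < s ≤ r ≤ √T`. -/
theorem volume_ratio_from_sobolev {X : Type*} [MetricSpace X] [MeasurableSpace X]
    [BorelSpace X] [ProperSpace X] (μ : Measure X) (hball : BallMeasureNontrivial μ)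
    (x : X) (T ν lam : ℝ) (hT : 0 < T) (hν : 2 < ν) (hlam : 0 < lam)
    -- (a) lower volume bound
    (c Q : ℝ) (hc : 0 < c) (hQ : 0 < Q)
    (hlow : ∀ τ : ℝ, 0 < τ → τ ≤ Real.sqrt T → ENNReal.ofReal (c * τ ^ Q) ≤ μ (ball x τ))
    -- (b) Sobolev inequality on balls centered at x with radius at most √T
    (hSob : ∀ r : ℝ, 0 < r → r ≤ Real.sqrt T → ∀ φ : X → ℝ,
      (∃ K : ℝ≥0, LipschitzWith K φ) → HasCompactSupport φ → tsupport φ ⊆ ball x r →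
      (∫ y in ball x r, |φ y| ^ (2 * ν / (ν - 2)) ∂μ) ^ (1 - 2 / ν) ≤
        lam * r ^ 2 * (μ (ball x r)).toReal ^ (-(2 / ν)) *
          ((∫ y in ball x r, locLip φ y ^ 2 ∂μ) +
            (∫ y in ball x r, |φ y| ^ 2 ∂μ) / r ^ 2)) :
    ∀ s r : ℝ, 0 < s → s ≤ r → r ≤ Real.sqrt T →
      (μ (ball x r)).toReal / r ^ ν ≤
        ((2 : ℝ) ^ (ν + 1) * lam) ^ (ν / 2) * ((μ (ball x s)).toReal / s ^ ν) :=
  volume_ratio_from_sobolev_general μ hball x T ν lam hν hlam c Q hc hlow hSob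
end
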